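/- arXiv:2604.18952 — 3 statements merged into one kernel-verified Lean document; each statement's English description precedes it below -/
import Mathlib

section
/- Let h : ℝ → ℝ be an integrable odd function with h(u) < 0 for u > 0, and let w > 0. Then for every λ ∈ ℂ with Re λ > 0, the quantity D(λ) := 1 - i w ∫_ℝ h(u)/(λ + iu) du is nonzero. In fact, if D(λ) = 0 then ∫_ℝ u h(u)/|λ+iu|² du = -1/w, which is impossible since u h(u) ≤ 0 for all u. -/
open MeasureTheory

theorem stmt_6 (h : ℝ → ℝ) (hInt : Integrable h)
    (hInt2 : Integrable (fun u => u * h u))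
    (hodd : ∀ u, h (-u) = -h u) (hneg : ∀ u > 0, h u < 0)
    (w : ℝ) (hw : 0 < w) (lam : ℂ) (hlam : 0 < lam.re) :
    (1 : ℂ) - Complex.I * (w : ℂ) *
        ∫ u : ℝ, (h u : ℂ) / (lam + (u : ℂ) * Complex.I) ≠ 0 := by
  intro hD
  set a := lam.re with ha_def
  set b := lam.im with hb_def
  have ha : 0 < a := hlam
  set N : ℝ → ℝ := fun u => a ^ 2 + (b + u) ^ 2 with hN_def
  have hNpos : ∀ u, 0 < N u := fun u =>
    lt_of_lt_of_le (by positivity) (le_add_of_nonneg_right (sq_nonneg _))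
  have hNge : ∀ u, a ^ 2 ≤ N u := fun u => le_add_of_nonneg_right (sq_nonneg _)
  have hNcont : Continuous N := by fun_prop
  have hzre : ∀ u : ℝ, (lam + (u:ℂ) * Complex.I).re = a := by intro u; simp [ha_def]
  have hzim : ∀ u : ℝ, (lam + (u:ℂ) * Complex.I).im = b + u := by intro u; simp [hb_def]
  have hnormSq : ∀ u : ℝ, Complex.normSq (lam + (u:ℂ) * Complex.I) = N u := by
    intro u; rw [Complex.normSq_apply, hzre, hzim]; simp [hN_def]; ring
  -- integrability helper
  have key : ∀ g : ℝ → ℝ, Integrable g → Integrable (fun u => g u / N u) := by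
    intro g hg
    apply Integrable.mono' (hg.norm.mul_const ((a^2)⁻¹))
    · simp only [div_eq_mul_inv]
      exact hg.1.mul ((hNcont.inv₀ fun u => (hNpos u).ne').aestronglyMeasurable)
    · filter_upwards with u
      rw [Real.norm_eq_abs, Real.norm_eq_abs, abs_div, abs_of_pos (hNpos u), div_eq_mul_inv]
      gcongr
      exact hNge u
  have h1 := key h hInt
  have h2 := key (fun u => u * h u) hInt2
  have hzcont : Continuous fun u : ℝ => lam + (u:ℂ) * Complex.I := by fun_prop
  have hf : Integrable (fun u : ℝ => (h u : ℂ) / (lam + (u:ℂ) * Complex.I)) := by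
    apply Integrable.mono' (hInt.norm.mul_const a⁻¹)
    · simp only [div_eq_mul_inv]
      exact (Complex.continuous_ofReal.comp_aestronglyMeasurable hInt.1).mul
        ((hzcont.inv₀ fun u => by
          intro h0
          have := hzre u; rw [h0] at this
          simp at this
          exact absurd this.symm (ne_of_gt ha)).aestronglyMeasurable)
    · filter_upwards with u
      rw [norm_div, Complex.norm_real, Real.norm_eq_abs, div_eq_mul_inv]
      gcongr
      calc a = |(lam + (u:ℂ) * Complex.I).re| := by rw [hzre]; exact (abs_of_pos ha).symm
        _ ≤ ‖lam + (u:ℂ) * Complex.I‖ := Complex.abs_re_le_norm _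
  set J := ∫ u : ℝ, (h u : ℂ) / (lam + (u:ℂ) * Complex.I) with hJ_def
  have hre_pt : ∀ u : ℝ, ((h u : ℂ) / (lam + (u:ℂ) * Complex.I)).re = a * (h u / N u) := by
    intro u
    rw [Complex.div_re, hnormSq, hzre, hzim]
    simp
    ring
  have him_pt : ∀ u : ℝ, ((h u : ℂ) / (lam + (u:ℂ) * Complex.I)).im
      = -(b * (h u / N u) + (u * h u) / N u) := by
    intro u
    rw [Complex.div_im, hnormSq, hzre, hzim]
    simp
    ring
  have hJre : J.re = a * ∫ u, h u / N u := by
    have h' := integral_re hf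
    simp only [RCLike.re_to_complex] at h'
    rw [hJ_def, ← h']
    simp_rw [hre_pt]
    exact integral_const_mul a _
  have hJim : J.im = -(b * ∫ u, h u / N u) - ∫ u, (u * h u) / N u := by
    have h' := integral_im hf
    simp only [RCLike.im_to_complex] at h'
    rw [hJ_def, ← h']
    simp_rw [him_pt]
    rw [integral_neg, integral_add (h1.const_mul b) h2, integral_const_mul]
    ring
  have hDre := congrArg Complex.re hD
  have hDim := congrArg Complex.im hD
  simp [Complex.mul_re, Complex.mul_im] at hDre hDim
  have hre0 : (∫ u, h u / N u) = 0 := by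
    have h0 : a * ∫ u, h u / N u = 0 := by
      rw [← hJre]
      rcases hDim with h' | h'
      · exact absurd h' (ne_of_gt hw)
      · exact h'
    exact (mul_eq_zero.mp h0).resolve_left (ne_of_gt ha)
  have hval : (∫ u, (u * h u) / N u) = 1 / w := by
    have him0 : w * J.im = -1 := by linarith
    rw [hJim, hre0] at him0
    field_simp at him0 ⊢
    linarith
  have hnonpos : (∫ u, (u * h u) / N u) ≤ 0 := by
    apply integral_nonpos
    intro u
    apply div_nonpos_of_nonpos_of_nonneg _ (hNpos u).le
    rcases lt_trichotomy u 0 with hu | hu | hu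
    · have hpos : 0 < h u := by
        have := hneg (-u) (by linarith)
        rw [hodd] at this; linarith
      exact mul_nonpos_of_nonpos_of_nonneg hu.le hpos.le
    · simp [hu]
    · exact mul_nonpos_of_nonneg_of_nonpos hu.le (hneg u hu).le
  have hwpos : 0 < 1 / w := one_div_pos.mpr hw
  rw [hval] at hnonpos
  linarith
end

section
/- Hausdorff–Young decay transfer: let d ≥ 1, and let ρ̂ : ℝ^d → ℂ satisfy |ρ̂(k)| ≤ M ⟨k⟩^{-σ} ⟨kt⟩^{-N} for some fixed t ≥ 0, where σ, N ≥ 0. Then for any p ∈ [2,∞] with conjugate exponent p' and any integer n ≥ 0 with n < min{N, σ} - d, one has (∫_{ℝ^d} |k|^{n p'} |ρ̂(k)|^{p'} dk)^{1/p'} ≤ C M ⟨t⟩^{-n - d(1-1/p)}, with C depending only on d, n, σ, N, p. -/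
open MeasureTheory

noncomputable def jb {d : ℕ} (x : EuclideanSpace ℝ (Fin d)) : ℝ := Real.sqrt (1 + ‖x‖^2)

noncomputable def jbs {d : ℕ} (x : EuclideanSpace ℝ (Fin d)) (s : ℝ) : ℝ :=
  Real.sqrt (1 + ‖x‖^2 * s^2)

lemma one_le_sqrt_aux {x : ℝ} (hx : 1 ≤ x) : 1 ≤ Real.sqrt x := by
  have := Real.sqrt_le_sqrt hx
  rwa [Real.sqrt_one] at this

noncomputable def gfun (d : ℕ) (a b : ℝ) (y : EuclideanSpace ℝ (Fin d)) : ENNReal :=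
  ENNReal.ofReal (‖y‖ ^ a * Real.sqrt (1 + ‖y‖^2) ^ b)

lemma gfun_measurable (d : ℕ) (a b : ℝ) (ha : 0 ≤ a) : Measurable (gfun d a b) := by
  have h1 : Continuous fun y : EuclideanSpace ℝ (Fin d) => ‖y‖ ^ a :=
    Continuous.rpow_const continuous_norm (fun x => Or.inr ha)
  have h2 : Continuous fun y : EuclideanSpace ℝ (Fin d) => Real.sqrt (1 + ‖y‖^2) ^ b := by
    apply Continuous.rpow_const
    · exact Real.continuous_sqrt.comp (by continuity)
    · intro y
      exact Or.inl (Real.sqrt_pos.mpr (by positivity)).ne'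
  exact ENNReal.measurable_ofReal.comp (h1.mul h2).measurable

set_option maxHeartbeats 1000000 in
/-- Hausdorff–Young decay transfer, stated in terms of the conjugate exponent
`q = p' ∈ [1,2]` (so that `d*(1-1/p) = d/q`; `q = 1` corresponds to `p = ∞`). -/
theorem stmt_18 (d : ℕ) (hd : 1 ≤ d) (n : ℕ) (σ N q : ℝ)
    (hσ : 0 ≤ σ) (hN : 0 ≤ N) (hq1 : 1 ≤ q) (hq2 : q ≤ 2)
    (hn : (n : ℝ) < min N σ - d) :
    ∃ C > 0, ∀ (t M : ℝ) (ρ : EuclideanSpace ℝ (Fin d) → ℂ), 0 ≤ t → 0 ≤ M →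
      (∀ k, ‖ρ k‖ ≤ M * jb k ^ (-σ) * jbs k t ^ (-N)) →
      (∫⁻ k, ENNReal.ofReal (‖k‖ ^ ((n : ℝ) * q) * ‖ρ k‖ ^ q)) ^ (1 / q) ≤
        ENNReal.ofReal (C * M * Real.sqrt (1 + t ^ 2) ^ (-(n : ℝ) - (d : ℝ) / q)) := by
  have hq0 : (0:ℝ) < q := lt_of_lt_of_le one_pos hq1
  set m : ℝ := min N σ with hm
  have hm0 : 0 ≤ m := le_min hN hσ
  have hmn : (d:ℝ) < m - n := by linarith
  have hn0 : (0:ℝ) ≤ n := Nat.cast_nonneg n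
  set g : EuclideanSpace ℝ (Fin d) → ENNReal := gfun d ((n:ℝ)*q) (-(m*q)) with hgdef
  have hgmeas : Measurable g := gfun_measurable d _ _ (by positivity)
  set I := ∫⁻ y, g y with hIdef
  -- finiteness of the model integral
  have hIfin : I < ⊤ := by
    have hr : (Module.finrank ℝ (EuclideanSpace ℝ (Fin d)) : ℝ) < (m - n) * q := by
      rw [finrank_euclideanSpace_fin]
      nlinarith
    calc I ≤ ∫⁻ y : EuclideanSpace ℝ (Fin d),
            ENNReal.ofReal (Real.sqrt 2 ^ (m*q)) *
              ENNReal.ofReal ((1 + ‖y‖) ^ (-((m-n)*q))) := by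
          apply lintegral_mono
          intro y
          beta_reduce
          rw [hgdef, gfun, ← ENNReal.ofReal_mul (by positivity)]
          apply ENNReal.ofReal_le_ofReal
          have h1y : (0:ℝ) < 1 + ‖y‖ := by positivity
          have h1 : ‖y‖ ^ ((n:ℝ)*q) ≤ (1 + ‖y‖) ^ ((n:ℝ)*q) :=
            Real.rpow_le_rpow (norm_nonneg _) (by linarith) (by positivity)
          have hs : (1 + ‖y‖) / Real.sqrt 2 ≤ Real.sqrt (1 + ‖y‖^2) := by
            apply Real.le_sqrt_of_sq_le
            rw [div_pow, Real.sq_sqrt (by norm_num : (0:ℝ) ≤ 2),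
              div_le_iff₀ (by norm_num : (0:ℝ) < 2)]
            nlinarith [sq_nonneg (1 - ‖y‖)]
          have h2 : Real.sqrt (1 + ‖y‖^2) ^ (-(m*q)) ≤
              Real.sqrt 2 ^ (m*q) * (1 + ‖y‖) ^ (-(m*q)) := by
            have hmq : -(m*q) ≤ 0 := neg_nonpos.mpr (mul_nonneg hm0 hq0.le)
            have hxpos : (0:ℝ) < (1 + ‖y‖) / Real.sqrt 2 := by positivity
            have hle := Real.rpow_le_rpow_of_nonpos hxpos hs hmq
            calc Real.sqrt (1 + ‖y‖^2) ^ (-(m*q)) ≤ ((1 + ‖y‖) / Real.sqrt 2) ^ (-(m*q)) := hle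
              _ = Real.sqrt 2 ^ (m*q) * (1 + ‖y‖) ^ (-(m*q)) := by
                  rw [Real.div_rpow h1y.le (Real.sqrt_nonneg 2),
                    Real.rpow_neg (Real.sqrt_nonneg 2), div_inv_eq_mul, mul_comm]
          calc ‖y‖ ^ ((n:ℝ)*q) * Real.sqrt (1 + ‖y‖^2) ^ (-(m*q))
              ≤ (1 + ‖y‖) ^ ((n:ℝ)*q) * (Real.sqrt 2 ^ (m*q) * (1 + ‖y‖) ^ (-(m*q))) :=
                mul_le_mul h1 h2 (by positivity) (by positivity)
            _ = Real.sqrt 2 ^ (m*q) * ((1 + ‖y‖) ^ ((n:ℝ)*q) * (1 + ‖y‖) ^ (-(m*q))) := by ring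
            _ = Real.sqrt 2 ^ (m*q) * (1 + ‖y‖) ^ (-((m-n)*q)) := by
                rw [← Real.rpow_add h1y, show (n:ℝ)*q + -(m*q) = -((m-n)*q) by ring]
      _ = ENNReal.ofReal (Real.sqrt 2 ^ (m*q)) *
            ∫⁻ y : EuclideanSpace ℝ (Fin d), ENNReal.ofReal ((1 + ‖y‖) ^ (-((m-n)*q))) :=
          lintegral_const_mul' _ _ ENNReal.ofReal_ne_top
      _ < ⊤ := ENNReal.mul_lt_top ENNReal.ofReal_lt_top (finite_integral_one_add_norm hr)
  refine ⟨I.toReal ^ (1/q) + 1, by positivity, ?_⟩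
  intro t M ρ ht hM hρ
  set τ := Real.sqrt (1 + t^2) with hτdef
  have hτ1 : 1 ≤ τ := one_le_sqrt_aux (by nlinarith)
  have hτpos : (0:ℝ) < τ := lt_of_lt_of_le one_pos hτ1
  have hττ : τ^2 = 1 + t^2 := Real.sq_sqrt (by positivity)
  -- pointwise bound
  have key : ∀ k, ENNReal.ofReal (‖k‖ ^ ((n:ℝ)*q) * ‖ρ k‖ ^ q)
      ≤ ENNReal.ofReal (M ^ q * τ ^ (-((n:ℝ)*q))) * g (τ • k) := by
    intro k
    have hjb0 : (0:ℝ) ≤ jb k := Real.sqrt_nonneg _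
    have hjbs0 : (0:ℝ) ≤ jbs k t := Real.sqrt_nonneg _
    have hjb1 : 1 ≤ jb k := one_le_sqrt_aux (by nlinarith [sq_nonneg ‖k‖])
    have hjbs1 : 1 ≤ jbs k t := one_le_sqrt_aux (by nlinarith [sq_nonneg (‖k‖*t)])
    have hjτ1 : 1 ≤ jbs k τ := one_le_sqrt_aux (by nlinarith [sq_nonneg (‖k‖*τ)])
    have h1 : ‖ρ k‖ ^ q ≤ M ^ q * jb k ^ (-σ * q) * jbs k t ^ (-N * q) := by
      have h := Real.rpow_le_rpow (norm_nonneg _) (hρ k) hq0.le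
      rwa [Real.mul_rpow (by positivity) (by positivity),
        Real.mul_rpow hM (by positivity), ← Real.rpow_mul hjb0, ← Real.rpow_mul hjbs0] at h
    have hprod : jbs k τ ≤ jb k * jbs k t := by
      rw [jb, jbs, jbs, ← Real.sqrt_mul (by positivity)]
      apply Real.sqrt_le_sqrt
      nlinarith [sq_nonneg (‖k‖^2 * t), sq_nonneg ‖k‖, sq_nonneg (‖k‖*t)]
    have h2 : jb k ^ (-σ * q) * jbs k t ^ (-N * q) ≤ jbs k τ ^ (-(m*q)) := by
      calc jb k ^ (-σ * q) * jbs k t ^ (-N * q)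
          ≤ jb k ^ (-(m*q)) * jbs k t ^ (-(m*q)) := by
            apply mul_le_mul
            · exact Real.rpow_le_rpow_of_exponent_le hjb1
                (by nlinarith [min_le_right N σ])
            · exact Real.rpow_le_rpow_of_exponent_le hjbs1
                (by nlinarith [min_le_left N σ])
            · positivity
            · positivity
        _ = (jb k * jbs k t) ^ (-(m*q)) :=
            (Real.mul_rpow hjb0 hjbs0).symm
        _ ≤ jbs k τ ^ (-(m*q)) :=
            Real.rpow_le_rpow_of_nonpos (lt_of_lt_of_le one_pos hjτ1) hprod
              (neg_nonpos.mpr (mul_nonneg hm0 hq0.le))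
    have hnorm : ‖τ • k‖ = τ * ‖k‖ := by
      rw [norm_smul, Real.norm_eq_abs, abs_of_pos hτpos]
    have hsq : Real.sqrt (1 + ‖τ • k‖^2) = jbs k τ := by
      rw [jbs, hnorm]
      congr 1
      ring
    have hgk : g (τ • k) = ENNReal.ofReal
        (τ ^ ((n:ℝ)*q) * (‖k‖ ^ ((n:ℝ)*q) * jbs k τ ^ (-(m*q)))) := by
      rw [hgdef, gfun, hsq, hnorm, Real.mul_rpow hτpos.le (norm_nonneg _)]
      congr 1
      ring
    rw [hgk, ← ENNReal.ofReal_mul (by positivity)]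
    apply ENNReal.ofReal_le_ofReal
    have hc : τ ^ (-((n:ℝ)*q)) * τ ^ ((n:ℝ)*q) = 1 := by
      rw [← Real.rpow_add hτpos]
      simp
    have hrhs : M ^ q * τ ^ (-((n:ℝ)*q)) * (τ ^ ((n:ℝ)*q) * (‖k‖ ^ ((n:ℝ)*q) * jbs k τ ^ (-(m*q))))
        = M ^ q * (‖k‖ ^ ((n:ℝ)*q) * jbs k τ ^ (-(m*q))) := by
      rw [show M ^ q * τ ^ (-((n:ℝ)*q)) * (τ ^ ((n:ℝ)*q) * (‖k‖ ^ ((n:ℝ)*q) * jbs k τ ^ (-(m*q))))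
        = M ^ q * ((τ ^ (-((n:ℝ)*q)) * τ ^ ((n:ℝ)*q)) * (‖k‖ ^ ((n:ℝ)*q) * jbs k τ ^ (-(m*q))))
        from by ring, hc, one_mul]
    rw [hrhs]
    have hρq : ‖ρ k‖ ^ q ≤ M ^ q * jbs k τ ^ (-(m*q)) := by
      calc ‖ρ k‖ ^ q ≤ M ^ q * jb k ^ (-σ * q) * jbs k t ^ (-N * q) := h1
        _ = M ^ q * (jb k ^ (-σ * q) * jbs k t ^ (-N * q)) := by ring
        _ ≤ M ^ q * jbs k τ ^ (-(m*q)) :=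
            mul_le_mul_of_nonneg_left h2 (by positivity)
    calc ‖k‖ ^ ((n:ℝ)*q) * ‖ρ k‖ ^ q
        ≤ ‖k‖ ^ ((n:ℝ)*q) * (M ^ q * jbs k τ ^ (-(m*q))) :=
          mul_le_mul_of_nonneg_left hρq (by positivity)
      _ = M ^ q * (‖k‖ ^ ((n:ℝ)*q) * jbs k τ ^ (-(m*q))) := by ring
  -- scaling
  have hscale : ∫⁻ x : EuclideanSpace ℝ (Fin d), g (τ • x) = ENNReal.ofReal ((τ ^ d)⁻¹) * I := by
    rw [← lintegral_map hgmeas (measurable_const_smul τ),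
      MeasureTheory.Measure.map_addHaar_smul volume hτpos.ne', finrank_euclideanSpace_fin,
      lintegral_smul_measure, abs_of_pos (by positivity), smul_eq_mul, hIdef]
  have hmain : (∫⁻ k, ENNReal.ofReal (‖k‖ ^ ((n:ℝ)*q) * ‖ρ k‖ ^ q))
      ≤ ENNReal.ofReal (M ^ q * τ ^ (-((n:ℝ)*q) - d)) * I := by
    calc (∫⁻ k, ENNReal.ofReal (‖k‖ ^ ((n:ℝ)*q) * ‖ρ k‖ ^ q))
        ≤ ∫⁻ k, ENNReal.ofReal (M ^ q * τ ^ (-((n:ℝ)*q))) * g (τ • k) := lintegral_mono key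
      _ = ENNReal.ofReal (M ^ q * τ ^ (-((n:ℝ)*q))) * ∫⁻ k, g (τ • k) :=
          lintegral_const_mul' _ _ ENNReal.ofReal_ne_top
      _ = ENNReal.ofReal (M ^ q * τ ^ (-((n:ℝ)*q) - d)) * I := by
          rw [hscale, ← mul_assoc, ← ENNReal.ofReal_mul (by positivity)]
          congr 2
          rw [← Real.rpow_natCast τ d, ← Real.rpow_neg hτpos.le, mul_assoc,
            ← Real.rpow_add hτpos, ← sub_eq_add_neg]
  -- put everything together
  have hpow : (ENNReal.ofReal (M ^ q * τ ^ (-((n:ℝ)*q) - d)) * I) ^ (1/q)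
      = ENNReal.ofReal (M * τ ^ (-(n:ℝ) - (d:ℝ)/q)) * ENNReal.ofReal (I.toReal ^ (1/q)) := by
    rw [ENNReal.mul_rpow_of_nonneg _ _ (by positivity),
      ENNReal.ofReal_rpow_of_nonneg (by positivity) (by positivity)]
    congr 1
    · congr 1
      rw [Real.mul_rpow (by positivity) (by positivity), ← Real.rpow_mul hM,
        ← Real.rpow_mul hτpos.le, mul_one_div_cancel hq0.ne', Real.rpow_one]
      congr 1
      field_simp
    · conv_lhs => rw [← ENNReal.ofReal_toReal hIfin.ne]
      rw [ENNReal.ofReal_rpow_of_nonneg ENNReal.toReal_nonneg (by positivity)]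
  calc (∫⁻ k, ENNReal.ofReal (‖k‖ ^ ((n:ℝ)*q) * ‖ρ k‖ ^ q)) ^ (1/q)
      ≤ (ENNReal.ofReal (M ^ q * τ ^ (-((n:ℝ)*q) - d)) * I) ^ (1/q) :=
        ENNReal.rpow_le_rpow hmain (by positivity)
    _ = ENNReal.ofReal (M * τ ^ (-(n:ℝ) - (d:ℝ)/q)) * ENNReal.ofReal (I.toReal ^ (1/q)) := hpow
    _ ≤ ENNReal.ofReal ((I.toReal ^ (1/q) + 1) * M * τ ^ (-(n:ℝ) - (d:ℝ)/q)) := by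
        rw [← ENNReal.ofReal_mul (by positivity)]
        apply ENNReal.ofReal_le_ofReal
        have h1 : (0:ℝ) ≤ τ ^ (-(n:ℝ) - (d:ℝ)/q) := by positivity
        have h2 : (0:ℝ) ≤ I.toReal ^ (1/q) := by positivity
        nlinarith [mul_nonneg hM h1]
end

section
/- Convolution bound with loss: let d ≥ 1 and σ > d, N ≥ 0, t ≥ 0. Then there is C = C(d,σ,N) such that for all k ∈ ℝ^d and t ≥ 0, |k| ∫_0^t ⟨k(t-s)⟩^{-n₀+3} ⟨k⟩^{-σ} ⟨ks⟩^{-N} ds ≤ C ⟨k⟩^{-σ} ⟨kt⟩^{-N}, provided n₀ - 3 ≥ N and n₀ - 3 ≥ 2 (so that the kernel decays at least quadratically). -/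
open MeasureTheory Set

section aux

variable {d : ℕ} (k : EuclideanSpace ℝ (Fin d))

lemma one_le_jbs (s : ℝ) : 1 ≤ jbs k s := by
  rw [jbs, Real.one_le_sqrt]
  nlinarith [sq_nonneg (‖k‖ * s)]

lemma jbs_pos (s : ℝ) : 0 < jbs k s := lt_of_lt_of_le one_pos (one_le_jbs k s)

lemma one_le_jb : 1 ≤ jb k := by
  rw [jb, Real.one_le_sqrt]
  nlinarith [sq_nonneg ‖k‖]

lemma jbs_le_jbs {u v : ℝ} (h : u^2 ≤ v^2) : jbs k u ≤ jbs k v :=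
  Real.sqrt_le_sqrt (by nlinarith [sq_nonneg ‖k‖])

lemma jbs_le_two_jbs_half (t : ℝ) : jbs k t ≤ 2 * jbs k (t/2) := by
  have h4 : (0:ℝ) ≤ 4 := by norm_num
  have : jbs k t ≤ Real.sqrt (4 * (1 + ‖k‖^2 * (t/2)^2)) := by
    apply Real.sqrt_le_sqrt; nlinarith [sq_nonneg (‖k‖ * t)]
  calc jbs k t ≤ Real.sqrt (4 * (1 + ‖k‖^2 * (t/2)^2)) := this
    _ = 2 * jbs k (t/2) := by
        rw [Real.sqrt_mul h4, show Real.sqrt 4 = 2 by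
          rw [show (4:ℝ) = 2^2 by norm_num, Real.sqrt_sq (by norm_num)]]
        rfl

lemma cont_jbs_rpow (p : ℝ) : Continuous fun s : ℝ => jbs k s ^ p := by
  apply Continuous.rpow_const
  · exact Real.continuous_sqrt.comp (by continuity)
  · exact fun x => Or.inl (ne_of_gt (jbs_pos k x))

/-- key pointwise bound -/
lemma pointwise_bound {m N : ℝ} (hm2 : 2 ≤ m) (hN : 0 ≤ N) (hNm : N ≤ m)
    {t s : ℝ} (hs : s ∈ Icc (0:ℝ) t) :
    jbs k (t - s) ^ (-m) * jbs k s ^ (-N) ≤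
      (2:ℝ) ^ N * jbs k t ^ (-N) * (jbs k s ^ (-(2:ℝ)) + jbs k (t - s) ^ (-(2:ℝ))) := by
  obtain ⟨hs0, hst⟩ := hs
  set x := jbs k (t - s) with hxdef
  set y := jbs k s with hydef
  set T := jbs k t with hTdef
  have hx1 : 1 ≤ x := one_le_jbs k _
  have hy1 : 1 ≤ y := one_le_jbs k _
  have hT1 : 1 ≤ T := one_le_jbs k _
  have hxpos : 0 < x := by linarith
  have hypos : 0 < y := by linarith
  -- generic: if T ≤ 2*z then z^(-N) ≤ 2^N * T^(-N)
  have key2 : ∀ z : ℝ, 0 < z → T ≤ 2 * z → z ^ (-N) ≤ (2:ℝ) ^ N * T ^ (-N) := by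
    intro z hz hTz
    have h1 : T ^ (-N) ≥ (2 * z) ^ (-N) :=
      Real.rpow_le_rpow_of_nonpos (by linarith) hTz (by linarith)
    have h2 : (2 * z) ^ (-N) = (2:ℝ) ^ (-N) * z ^ (-N) :=
      Real.mul_rpow (by norm_num) hz.le
    have h3 : (2:ℝ) ^ N * ((2:ℝ) ^ (-N) * z ^ (-N)) = z ^ (-N) := by
      rw [← mul_assoc, ← Real.rpow_add (by norm_num : (0:ℝ) < 2)]
      simp
    calc z ^ (-N) = (2:ℝ) ^ N * ((2:ℝ) ^ (-N) * z ^ (-N)) := h3.symm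
      _ ≤ (2:ℝ) ^ N * T ^ (-N) := by
          rw [← h2]
          exact mul_le_mul_of_nonneg_left h1 (Real.rpow_nonneg (by norm_num) _)
  have h2pos : (0:ℝ) ≤ (2:ℝ) ^ N * T ^ (-N) := by positivity
  rcases le_total s (t - s) with hc | hc
  · -- s ≤ t - s : t/2 ≤ t - s
    have hhalf : t/2 ≤ t - s := by linarith
    have hxT : T ≤ 2 * x := by
      refine (jbs_le_two_jbs_half k t).trans ?_
      have : jbs k (t/2) ≤ x := jbs_le_jbs k (by nlinarith)
      linarith
    have hyx : y ≤ x := jbs_le_jbs k (by nlinarith)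
    have hxN : x ^ (-N) ≤ (2:ℝ) ^ N * T ^ (-N) := key2 x hxpos hxT
    have hsplit : x ^ (-m) = x ^ (-N) * x ^ (-(m - N)) := by
      rw [← Real.rpow_add hxpos]; ring_nf
    have hfac : x ^ (-(m - N)) * y ^ (-N) ≤ y ^ (-(2:ℝ)) := by
      have e1 : x ^ (-(m - N)) ≤ y ^ (-(m - N)) :=
        Real.rpow_le_rpow_of_nonpos hypos hyx (by linarith)
      have e2 : x ^ (-(m - N)) * y ^ (-N) ≤ y ^ (-(m - N)) * y ^ (-N) :=
        mul_le_mul_of_nonneg_right e1 (Real.rpow_nonneg hypos.le _)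
      have e3 : y ^ (-(m - N)) * y ^ (-N) = y ^ (-m) := by
        rw [← Real.rpow_add hypos]; ring_nf
      have e4 : y ^ (-m) ≤ y ^ (-(2:ℝ)) :=
        Real.rpow_le_rpow_of_exponent_le hy1 (by linarith)
      linarith
    calc x ^ (-m) * y ^ (-N) = x ^ (-N) * (x ^ (-(m - N)) * y ^ (-N)) := by
          rw [hsplit]; ring
      _ ≤ ((2:ℝ) ^ N * T ^ (-N)) * y ^ (-(2:ℝ)) := by
          apply mul_le_mul hxN hfac _ h2pos
          positivity
      _ ≤ (2:ℝ) ^ N * T ^ (-N) * (y ^ (-(2:ℝ)) + x ^ (-(2:ℝ))) := by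
          apply mul_le_mul_of_nonneg_left _ h2pos
          have : (0:ℝ) ≤ x ^ (-(2:ℝ)) := Real.rpow_nonneg hxpos.le _
          linarith
  · -- t - s ≤ s : t/2 ≤ s
    have hhalf : t/2 ≤ s := by linarith
    have hyT : T ≤ 2 * y := by
      refine (jbs_le_two_jbs_half k t).trans ?_
      have : jbs k (t/2) ≤ y := jbs_le_jbs k (by nlinarith)
      linarith
    have hyN : y ^ (-N) ≤ (2:ℝ) ^ N * T ^ (-N) := key2 y hypos hyT
    have hxm : x ^ (-m) ≤ x ^ (-(2:ℝ)) :=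
      Real.rpow_le_rpow_of_exponent_le hx1 (by linarith)
    calc x ^ (-m) * y ^ (-N) ≤ x ^ (-(2:ℝ)) * ((2:ℝ) ^ N * T ^ (-N)) := by
          apply mul_le_mul hxm hyN (Real.rpow_nonneg hypos.le _)
          positivity
      _ ≤ (2:ℝ) ^ N * T ^ (-N) * (y ^ (-(2:ℝ)) + x ^ (-(2:ℝ))) := by
          rw [mul_comm]
          apply mul_le_mul_of_nonneg_left _ h2pos
          have : (0:ℝ) ≤ y ^ (-(2:ℝ)) := Real.rpow_nonneg hypos.le _
          linarith

lemma jbs_rpow_neg_two (s : ℝ) : jbs k s ^ (-(2:ℝ)) = (1 + ‖k‖^2 * s^2)⁻¹ := by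
  have h0 : (0:ℝ) ≤ 1 + ‖k‖^2 * s^2 := by positivity
  rw [jbs, show (-(2:ℝ)) = -((2:ℕ):ℝ) by norm_num, Real.rpow_neg (Real.sqrt_nonneg _),
    Real.rpow_natCast, Real.sq_sqrt h0]

/-- the basic arctan integral bound -/
lemma int_bound_basic {t : ℝ} (ht : 0 ≤ t) :
    ∫ s in Icc (0:ℝ) t, ‖k‖ * jbs k s ^ (-(2:ℝ)) ≤ Real.pi / 2 := by
  set a := ‖k‖ with ha
  have hcont : Continuous fun s : ℝ => a * (1 + a^2 * s^2)⁻¹ := by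
    apply Continuous.mul continuous_const
    apply Continuous.inv₀ (by continuity)
    intro x; positivity
  have heq : ∀ s : ℝ, a * jbs k s ^ (-(2:ℝ)) = a * (1 + a^2 * s^2)⁻¹ := by
    intro s; rw [jbs_rpow_neg_two]
  have hderiv : ∀ s ∈ uIcc (0:ℝ) t,
      HasDerivAt (fun u => Real.arctan (a * u)) (a * (1 + a^2 * s^2)⁻¹) s := by
    intro s _
    have h := (Real.hasDerivAt_arctan (a * s)).comp s ((hasDerivAt_id s).const_mul a)
    refine h.congr_deriv ?_
    rw [mul_one, mul_pow, one_div, mul_comm]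
  have hint : (∫ s in (0:ℝ)..t, a * (1 + a^2 * s^2)⁻¹) = Real.arctan (a * t) := by
    rw [intervalIntegral.integral_eq_sub_of_hasDerivAt hderiv
      (hcont.intervalIntegrable 0 t)]
    simp
  calc ∫ s in Icc (0:ℝ) t, a * jbs k s ^ (-(2:ℝ))
      = ∫ s in Icc (0:ℝ) t, a * (1 + a^2 * s^2)⁻¹ := by
        apply setIntegral_congr_fun measurableSet_Icc
        intro s _; exact heq s
    _ = ∫ s in (0:ℝ)..t, a * (1 + a^2 * s^2)⁻¹ := by
        rw [intervalIntegral.integral_of_le ht, integral_Icc_eq_integral_Ioc]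
    _ = Real.arctan (a * t) := hint
    _ ≤ Real.pi / 2 := (Real.arctan_lt_pi_div_two _).le

lemma int_bound_reflect {t : ℝ} (ht : 0 ≤ t) :
    ∫ s in Icc (0:ℝ) t, ‖k‖ * jbs k (t - s) ^ (-(2:ℝ)) ≤ Real.pi / 2 := by
  have : (∫ s in Icc (0:ℝ) t, ‖k‖ * jbs k (t - s) ^ (-(2:ℝ)))
      = ∫ s in Icc (0:ℝ) t, ‖k‖ * jbs k s ^ (-(2:ℝ)) := by
    rw [integral_Icc_eq_integral_Ioc, integral_Icc_eq_integral_Ioc,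
      ← intervalIntegral.integral_of_le ht, ← intervalIntegral.integral_of_le ht,
      intervalIntegral.integral_comp_sub_left (fun u => ‖k‖ * jbs k u ^ (-(2:ℝ))) t]
    norm_num
  rw [this]; exact int_bound_basic k ht

end aux

theorem stmt_19 (d : ℕ) (hd : 1 ≤ d) (σ N n₀ : ℝ) (hσ : (d : ℝ) < σ) (hN : 0 ≤ N)
    (h1 : N ≤ n₀ - 3) (h2 : 2 ≤ n₀ - 3) :
    ∃ C > 0, ∀ (k : EuclideanSpace ℝ (Fin d)) (t : ℝ), 0 ≤ t →
      ‖k‖ * ∫ s in Icc (0:ℝ) t,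
          jbs k (t - s) ^ (-(n₀ - 3)) * jb k ^ (-σ) * jbs k s ^ (-N) ≤
        C * jb k ^ (-σ) * jbs k t ^ (-N) := by
  refine ⟨(2:ℝ) ^ N * Real.pi, by positivity, ?_⟩
  intro k t ht
  set m := n₀ - 3 with hm
  set a := ‖k‖ with ha
  have ha0 : 0 ≤ a := norm_nonneg k
  have hjb : 0 < jb k ^ (-σ) := Real.rpow_pos_of_pos (lt_of_lt_of_le one_pos (one_le_jb k)) _
  have hT : 0 < jbs k t ^ (-N) := Real.rpow_pos_of_pos (jbs_pos k t) _
  -- constant in front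
  set c : ℝ := jb k ^ (-σ) * ((2:ℝ) ^ N * jbs k t ^ (-N)) with hc
  have hc0 : 0 ≤ c := by positivity
  -- continuity of integrands
  have contF : Continuous fun s : ℝ =>
      a * (jbs k (t - s) ^ (-m) * jb k ^ (-σ) * jbs k s ^ (-N)) := by
    apply Continuous.mul continuous_const
    exact (((cont_jbs_rpow k (-m)).comp (continuous_const.sub continuous_id)).mul
      continuous_const).mul (cont_jbs_rpow k (-N))
  have cont1 : Continuous fun s : ℝ => a * jbs k s ^ (-(2:ℝ)) :=
    continuous_const.mul (cont_jbs_rpow k (-(2:ℝ)))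
  have cont2 : Continuous fun s : ℝ => a * jbs k (t - s) ^ (-(2:ℝ)) :=
    continuous_const.mul ((cont_jbs_rpow k (-(2:ℝ))).comp (continuous_const.sub continuous_id))
  have contH : Continuous fun s : ℝ =>
      c * (a * jbs k s ^ (-(2:ℝ)) + a * jbs k (t - s) ^ (-(2:ℝ))) :=
    continuous_const.mul (cont1.add cont2)
  -- pointwise bound
  have hpt : ∀ s ∈ Icc (0:ℝ) t,
      a * (jbs k (t - s) ^ (-m) * jb k ^ (-σ) * jbs k s ^ (-N)) ≤
        c * (a * jbs k s ^ (-(2:ℝ)) + a * jbs k (t - s) ^ (-(2:ℝ))) := by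
    intro s hs
    have P := pointwise_bound k h2 hN h1 hs
    have hnn : (0:ℝ) ≤ a * jb k ^ (-σ) := by positivity
    calc a * (jbs k (t - s) ^ (-m) * jb k ^ (-σ) * jbs k s ^ (-N))
        = (a * jb k ^ (-σ)) * (jbs k (t - s) ^ (-m) * jbs k s ^ (-N)) := by ring
      _ ≤ (a * jb k ^ (-σ)) *
          ((2:ℝ) ^ N * jbs k t ^ (-N) * (jbs k s ^ (-(2:ℝ)) + jbs k (t - s) ^ (-(2:ℝ)))) :=
          mul_le_mul_of_nonneg_left P hnn
      _ = c * (a * jbs k s ^ (-(2:ℝ)) + a * jbs k (t - s) ^ (-(2:ℝ))) := by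
          rw [hc]; ring
  -- assemble
  calc a * ∫ s in Icc (0:ℝ) t, jbs k (t - s) ^ (-m) * jb k ^ (-σ) * jbs k s ^ (-N)
      = ∫ s in Icc (0:ℝ) t, a * (jbs k (t - s) ^ (-m) * jb k ^ (-σ) * jbs k s ^ (-N)) :=
        (integral_const_mul a _).symm
    _ ≤ ∫ s in Icc (0:ℝ) t, c * (a * jbs k s ^ (-(2:ℝ)) + a * jbs k (t - s) ^ (-(2:ℝ))) := by
        apply setIntegral_mono_on (contF.integrableOn_Icc) (contH.integrableOn_Icc)
          measurableSet_Icc hpt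
    _ = c * ((∫ s in Icc (0:ℝ) t, a * jbs k s ^ (-(2:ℝ))) +
          ∫ s in Icc (0:ℝ) t, a * jbs k (t - s) ^ (-(2:ℝ))) := by
        rw [integral_const_mul, integral_add (cont1.integrableOn_Icc) (cont2.integrableOn_Icc)]
    _ ≤ c * (Real.pi / 2 + Real.pi / 2) := by
        apply mul_le_mul_of_nonneg_left _ hc0
        have b1 := int_bound_basic k ht
        have b2 := int_bound_reflect k ht
        rw [← ha] at b1 b2
        linarith
    _ = (2:ℝ) ^ N * Real.pi * jb k ^ (-σ) * jbs k t ^ (-N) := by rw [hc]; ring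
end
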